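/- Let α be a composition of n and τ, δ permutations of {1,...,n}. If the map j ↦ n+1-τ⁻¹δ(j) maps each block of [α] onto itself, then for every coarsening β of α, the map j ↦ n+1-τ⁻¹δ(j) maps each block of [β] onto itself, and moreover (τ⁻¹δ) applied to [β] (replacing each element i by τ⁻¹δ(i)) yields the set partition [β*]. -/
import Mathlib


/-- The `i`-th block (0-indexed) of the set partition `[α]` of `{1,…,n}`. -/
def compBlock (α : List ℕ) (i : ℕ) : Finset ℕ :=
  Finset.Ioc ((α.take i).sum) ((α.take (i + 1)).sum)

/-- `β` is a coarsening of `α`: `β` is obtained by summing adjacent parts of `α`. -/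
def IsCoarsening (β α : List ℕ) : Prop :=
  ∃ L : List (List ℕ), (∀ l ∈ L, l ≠ []) ∧ L.flatten = α ∧ L.map List.sum = β

lemma aux_sum_take_le (l : List ℕ) (k : ℕ) : (l.take k).sum ≤ l.sum := by
  conv_rhs => rw [← List.take_append_drop k l]
  rw [List.sum_append]
  exact Nat.le_add_right _ _

lemma aux_sum_take_mono (l : List ℕ) {p q : ℕ} (h : p ≤ q) :
    (l.take p).sum ≤ (l.take q).sum := by
  have hq : (l.take q).take p = l.take p := by
    rw [List.take_take, Nat.min_eq_left h]
  rw [← hq]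
  exact aux_sum_take_le _ _

lemma aux_Ioc_eq_biUnion (α : List ℕ) {p q : ℕ} (h : p ≤ q) :
    Finset.Ioc ((α.take p).sum) ((α.take q).sum) = (Finset.Ico p q).biUnion (compBlock α) := by
  induction q, h using Nat.le_induction with
  | base => simp
  | succ q hq ih =>
    rw [Nat.Ico_succ_right_eq_insert_Ico hq, Finset.biUnion_insert, ← ih,
      ← Finset.Ioc_union_Ioc_eq_Ioc (aux_sum_take_mono α hq) (aux_sum_take_mono α (Nat.le_succ q))]
    rw [Finset.union_comm]
    rfl

lemma aux_sigma_mem (n : ℕ) (τ δ : Equiv.Perm ℕ)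
    (hτ : ∀ j, j ∉ Finset.Icc 1 n → τ j = j) (hδ : ∀ j, j ∉ Finset.Icc 1 n → δ j = j)
    {x : ℕ} (hx : x ∈ Finset.Icc 1 n) : τ.symm (δ x) ∈ Finset.Icc 1 n := by
  by_contra hy
  have h1 : τ (τ.symm (δ x)) = τ.symm (δ x) := hτ _ hy
  have h2 : δ x = τ.symm (δ x) := by
    conv_lhs => rw [← Equiv.apply_symm_apply τ (δ x)]
    rw [h1]
  have h3 : δ (τ.symm (δ x)) = τ.symm (δ x) := hδ _ hy
  have : x = τ.symm (δ x) := δ.injective (h2.trans h3.symm)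
  exact hy (this ▸ hx)

lemma aux_image_Ioc_flip (n a b : ℕ) (hb : b ≤ n) :
    (Finset.Ioc a b).image (fun z => n + 1 - z) = Finset.Ioc (n - b) (n - a) := by
  ext y
  simp only [Finset.mem_image, Finset.mem_Ioc]
  constructor
  · rintro ⟨z, ⟨h1, h2⟩, rfl⟩; omega
  · rintro ⟨h1, h2⟩; exact ⟨n + 1 - y, ⟨by omega, by omega⟩, by omega⟩

/-- If the map j ↦ n+1-τ⁻¹δ(j) maps each block of [α] onto itself, then for
every coarsening β of α it maps each block of [β] onto itself, and moreover τ⁻¹δ applied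
to [β] yields the set partition [β*]. -/
theorem stmt_6 (n : ℕ) (α : List ℕ) (hpos : ∀ a ∈ α, 0 < a) (hsum : α.sum = n)
    (τ δ : Equiv.Perm ℕ)
    (hτ : ∀ j, j ∉ Finset.Icc 1 n → τ j = j) (hδ : ∀ j, j ∉ Finset.Icc 1 n → δ j = j)
    (hblocks : ∀ i < α.length,
      (compBlock α i).image (fun j => n + 1 - τ.symm (δ j)) = compBlock α i) :
    ∀ β, IsCoarsening β α →
      (∀ j < β.length,
        (compBlock β j).image (fun x => n + 1 - τ.symm (δ x)) = compBlock β j) ∧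
      (Finset.range β.length).image (fun j => (compBlock β j).image (fun x => τ.symm (δ x)))
        = (Finset.range β.reverse.length).image (fun j => compBlock β.reverse j) := by
  rintro β ⟨L, hLne, hLflat, hLmap⟩
  -- partial sums of β are partial sums of α
  have hps : ∀ j, (β.take j).sum = (α.take (((L.map List.length).take j).sum)).sum := by
    intro j
    rw [← hLflat, List.take_sum_flatten, List.sum_flatten, ← hLmap, List.map_take]
  have hβsum : β.sum = n := by
    rw [← hLmap, ← List.sum_flatten, hLflat, hsum]
  have hplen : ∀ j, ((L.map List.length).take j).sum ≤ α.length := by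
    intro j
    calc ((L.map List.length).take j).sum ≤ (L.map List.length).sum := aux_sum_take_le _ _
      _ = α.length := by rw [← hLflat, List.length_flatten]
  have hpmono : ∀ j, ((L.map List.length).take j).sum ≤ ((L.map List.length).take (j+1)).sum :=
    fun j => aux_sum_take_mono _ (Nat.le_succ j)
  have hblock : ∀ j, compBlock β j =
      (Finset.Ico (((L.map List.length).take j).sum) (((L.map List.length).take (j+1)).sum)).biUnion
        (compBlock α) := by
    intro j
    rw [compBlock, hps j, hps (j+1), aux_Ioc_eq_biUnion α (hpmono j)]
  -- Part 1
  have part1 : ∀ j < β.length,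
      (compBlock β j).image (fun x => n + 1 - τ.symm (δ x)) = compBlock β j := by
    intro j _
    rw [hblock j, Finset.biUnion_image]
    apply Finset.biUnion_congr rfl
    intro i hi
    exact hblocks i (lt_of_lt_of_le (Finset.mem_Ico.mp hi).2 (hplen (j+1)))
  refine ⟨part1, ?_⟩
  -- elements of blocks are in Icc 1 n
  have hmem : ∀ j x, x ∈ compBlock β j → x ∈ Finset.Icc 1 n := by
    intro j x hx
    rw [compBlock, Finset.mem_Ioc] at hx
    rw [Finset.mem_Icc]
    have h2 : (β.take (j+1)).sum ≤ n := hβsum ▸ aux_sum_take_le β (j+1)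
    omega
  -- the σ-image of each β-block
  have hσ : ∀ j < β.length, (compBlock β j).image (fun x => τ.symm (δ x))
      = Finset.Ioc (n - (β.take (j+1)).sum) (n - (β.take j).sum) := by
    intro j hj
    have step1 : (compBlock β j).image (fun x => τ.symm (δ x))
        = ((compBlock β j).image (fun x => n + 1 - τ.symm (δ x))).image (fun z => n + 1 - z) := by
      rw [Finset.image_image]
      apply Finset.image_congr
      intro x hx
      have hy := aux_sigma_mem n τ δ hτ hδ (hmem j x hx)
      rw [Finset.mem_Icc] at hy
      simp only [Function.comp_apply]
      omega
    rw [step1, part1 j hj, compBlock,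
      aux_image_Ioc_flip n _ _ (hβsum ▸ aux_sum_take_le β (j+1))]
  -- reversed blocks
  have hrevsum : ∀ k, (β.reverse.take k).sum = n - (β.take (β.length - k)).sum := by
    intro k
    rw [List.take_reverse, List.sum_reverse]
    have := List.take_append_drop (β.length - k) β
    have h2 : (β.take (β.length - k)).sum + (β.drop (β.length - k)).sum = β.sum := by
      rw [← List.sum_append, this]
    omega
  have hrev : ∀ j < β.length, compBlock β.reverse (β.length - 1 - j)
      = Finset.Ioc (n - (β.take (j+1)).sum) (n - (β.take j).sum) := by
    intro j hj
    have e1 : β.length - (β.length - 1 - j) = j + 1 := by omega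
    have e2 : β.length - (β.length - 1 - j + 1) = j := by omega
    rw [compBlock, hrevsum, hrevsum, e1, e2]
  -- assemble part 2
  rw [List.length_reverse]
  have himg : (Finset.range β.length).image (fun j => β.length - 1 - j)
      = Finset.range β.length := by
    ext x
    simp only [Finset.mem_image, Finset.mem_range]
    constructor
    · rintro ⟨z, hz, rfl⟩; omega
    · intro hx; exact ⟨β.length - 1 - x, by omega, by omega⟩
  calc (Finset.range β.length).image (fun j => (compBlock β j).image (fun x => τ.symm (δ x)))
      = (Finset.range β.length).image
          ((fun j => compBlock β.reverse j) ∘ (fun j => β.length - 1 - j)) := by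
        apply Finset.image_congr
        intro j hj
        rw [Finset.mem_coe, Finset.mem_range] at hj
        simp only [Function.comp_apply]
        rw [hσ j hj, hrev j hj]
    _ = ((Finset.range β.length).image (fun j => β.length - 1 - j)).image
          (fun j => compBlock β.reverse j) := by rw [Finset.image_image]
    _ = (Finset.range β.length).image (fun j => compBlock β.reverse j) := by rw [himg]
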